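/- arXiv:2310.14189 — 3 statements merged into one kernel-verified Lean document; each statement's English description precedes it below -/
import Mathlib

section
/- Fix real numbers ξ, θ, θ⁻ and 0 < σ_min < σ_max. For N ≥ 2 let σᵢ = σ_min + ((i−1)/(N−1))·(σ_max − σ_min) for i ∈ {1,…,N}, Dᵢᴺ(θ, θ⁻) = (σ_min/σᵢ₊₁)ξ + (1 − σ_min/σᵢ₊₁)θ − (σ_min/σᵢ)ξ − (1 − σ_min/σᵢ)θ⁻, and Lᴺ(θ, θ⁻) = (1/(N−1))·Σ_{i=1}^{N−1} Dᵢᴺ(θ, θ⁻)². Then lim_{N→∞} Lᴺ(θ, θ⁻) = ((θ − θ⁻)²/(σ_max − σ_min)) · ∫_{σ_min}^{σ_max} (1 − σ_min/σ)² dσ. In particular, when θ⁻ ≠ θ the limiting objective does not depend on the data point ξ. -/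
/-!
On the uniform grid `sₖ = σmin + k h`, `h = (σmax - σmin)/n`, the toy difference is
`Dₖ = (σmin/sₖ₊₁ - σmin/sₖ)(ξ - θ) + (1 - σmin/sₖ)(θ - θ⁻)`, and the first coefficient is
`O(h)`. Hence `Dₖ² = (θ - θ⁻)² (1 - σmin/sₖ)² + O(h)` uniformly in `k`, so up to `O(1/n)` the loss
is `(θ - θ⁻)²/(σmax - σmin)` times a left Riemann sum of the monotone integrand `(1 - σmin/s)²`,
which converges to its integral; the data point `ξ` only enters the error term.
-/

open Filter Finset

/-- The `i`-th noise level of the uniform discretization with `N` steps. -/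
noncomputable def sigmaLvl (σmin σmax : ℝ) (N i : ℕ) : ℝ :=
  σmin + (((i : ℝ) - 1) / ((N : ℝ) - 1)) * (σmax - σmin)

/-- The difference `Dᵢᴺ(θ, θ⁻)` of student and teacher outputs in the toy model. -/
noncomputable def Dtoy (ξ θ θm σmin σmax : ℝ) (N i : ℕ) : ℝ :=
  (σmin / sigmaLvl σmin σmax N (i + 1)) * ξ + (1 - σmin / sigmaLvl σmin σmax N (i + 1)) * θ
    - (σmin / sigmaLvl σmin σmax N i) * ξ - (1 - σmin / sigmaLvl σmin σmax N i) * θm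

/-- The consistency-matching loss `Lᴺ(θ, θ⁻)` in the toy model. -/
noncomputable def Ltoy (ξ θ θm σmin σmax : ℝ) (N : ℕ) : ℝ :=
  (1 / ((N : ℝ) - 1)) * ∑ i ∈ Finset.Icc 1 (N - 1), (Dtoy ξ θ θm σmin σmax N i) ^ 2

theorem MonotoneOn.abs_riemannSum_sub_integral_le {f : ℝ → ℝ} {a b : ℝ} (hab : a ≤ b)
    (hf : MonotoneOn f (Set.Icc a b)) {n : ℕ} (hn : n ≠ 0) :
    |(b - a) / n * ∑ k ∈ range n, f (a + (b - a) / n * k) - ∫ x in a..b, f x|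
      ≤ (b - a) / n * (f b - f a) := by
  set h := (b - a) / n with h_def
  set F : ℝ → ℝ := fun x => f (a + h * x)
  have hh : 0 ≤ h := div_nonneg (sub_nonneg.2 hab) n.cast_nonneg
  have hb : a + h * n = b := by rw [h_def]; field_simp; ring
  have hF : MonotoneOn F (Set.Icc 0 (0 + n)) := by
    intro x hx y hy hxy
    refine hf ⟨?_, ?_⟩ ⟨?_, ?_⟩ (by gcongr)
    all_goals nlinarith [hx.1, hx.2, hy.1, hy.2]
  -- Rescaling by `h` turns the grid into `0, 1, …, n`, where Mathlib compares sums and integrals.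
  have hint : ∫ x in a..b, f x = h * ∫ x in (0 : ℝ)..0 + n, F x := by
    rw [← smul_eq_mul, intervalIntegral.smul_integral_comp_add_mul, mul_zero, add_zero, zero_add,
      hb]
  have htel : ∑ k ∈ range n, F ↑(k + 1) = ∑ k ∈ range n, F k + (f b - f a) := by
    have := sum_range_succ' (fun k : ℕ => F k) n
    rw [sum_range_succ] at this
    simp only [F, Nat.cast_zero, mul_zero, add_zero, hb] at this ⊢
    linarith
  have hlow := mul_le_mul_of_nonneg_left hF.sum_le_integral hh
  have hupp := mul_le_mul_of_nonneg_left hF.integral_le_sum hh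
  simp only [zero_add] at hlow hupp hint
  rw [htel, mul_add] at hupp
  rw [hint, abs_le]
  constructor <;> linarith

theorem MonotoneOn.tendsto_riemannSum {f : ℝ → ℝ} {a b : ℝ} (hab : a ≤ b)
    (hf : MonotoneOn f (Set.Icc a b)) :
    Tendsto (fun n : ℕ => (b - a) / n * ∑ k ∈ range n, f (a + (b - a) / n * k)) atTop
      (nhds (∫ x in a..b, f x)) := by
  rw [← tendsto_sub_nhds_zero_iff]
  refine squeeze_zero_norm' ?_ (tendsto_const_div_atTop_nhds_zero_nat ((b - a) * (f b - f a)))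
  filter_upwards [eventually_ne_atTop 0] with n hn
  rw [Real.norm_eq_abs, mul_div_right_comm]
  exact hf.abs_riemannSum_sub_integral_le hab hn

theorem sigmaLvl_succ_succ (σmin σmax : ℝ) (n k : ℕ) :
    sigmaLvl σmin σmax (n + 1) (k + 1) = σmin + (σmax - σmin) / n * k := by
  simp only [sigmaLvl, Nat.cast_add, Nat.cast_one, add_sub_cancel_right]
  ring

theorem Ltoy_succ (ξ θ θm σmin σmax : ℝ) (n : ℕ) :
    Ltoy ξ θ θm σmin σmax (n + 1)
      = 1 / n * ∑ k ∈ range n, Dtoy ξ θ θm σmin σmax (n + 1) (k + 1) ^ 2 := by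
  rw [Ltoy, Nat.cast_add_one, add_sub_cancel_right, Nat.add_sub_cancel, ← Ico_add_one_right_eq_Icc,
    sum_Ico_eq_sum_range]
  simp only [add_comm 1, Nat.add_sub_cancel]

theorem monotoneOn_one_sub_div_sq {c : ℝ} (hc : 0 < c) :
    MonotoneOn (fun s : ℝ => (1 - c / s) ^ 2) (Set.Ici c) := by
  intro s hs t ht hst
  have hs0 : 0 < s := hc.trans_le hs
  have hcs : 0 ≤ 1 - c / s := sub_nonneg.2 ((div_le_one hs0).2 hs)
  have hct : c / t ≤ c / s := div_le_div_of_nonneg_left hc.le hs0 hst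
  dsimp only
  gcongr

theorem abs_toy_sq_sub_le {σmin s t : ℝ} (h0 : 0 < σmin) (hs : σmin ≤ s) (hst : s ≤ t)
    (ξ θ θm : ℝ) :
    |((σmin / t) * ξ + (1 - σmin / t) * θ - (σmin / s) * ξ - (1 - σmin / s) * θm) ^ 2
        - (θ - θm) ^ 2 * (1 - σmin / s) ^ 2|
      ≤ (t - s) / σmin * (|ξ - θ| * (|ξ - θ| + 2 * |θ - θm|)) := by
  have hs0 : 0 < s := h0.trans_le hs
  have ht0 : 0 < t := hs0.trans_le hst
  set ε := σmin / t - σmin / s with hε_def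
  set A := 1 - σmin / s with hA_def
  have hA0 : 0 ≤ A := sub_nonneg.2 ((div_le_one hs0).2 hs)
  have hA1 : A ≤ 1 := sub_le_self _ (div_nonneg h0.le hs0.le)
  have hε_abs : |ε| = σmin / s - σmin / t := by
    rw [abs_of_nonpos (sub_nonpos.2 (div_le_div_of_nonneg_left h0.le hs0 hst)), neg_sub]
  have hε1 : |ε| ≤ 1 := by
    rw [hε_abs]; linarith [div_nonneg h0.le ht0.le]
  have hε : |ε| ≤ (t - s) / σmin := by
    rw [hε_abs, div_sub_div _ _ hs0.ne' ht0.ne', div_le_div_iff₀ (by positivity) h0]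
    nlinarith [mul_le_mul hs (hs.trans hst) h0.le hs0.le, sub_nonneg.2 hst]
  have hD : (σmin / t) * ξ + (1 - σmin / t) * θ - (σmin / s) * ξ - A * θm
      = ε * (ξ - θ) + A * (θ - θm) := by
    rw [hε_def, hA_def]; ring
  have hsq : (ε * (ξ - θ) + A * (θ - θm)) ^ 2 - (θ - θm) ^ 2 * A ^ 2
      = ε * (ξ - θ) * (ε * (ξ - θ) + 2 * A * (θ - θm)) := by ring
  have hsum : |ε * (ξ - θ) + 2 * A * (θ - θm)| ≤ |ξ - θ| + 2 * |θ - θm| := by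
    refine (abs_add_le _ _).trans (add_le_add ?_ ?_)
    · rw [abs_mul]; exact mul_le_of_le_one_left (abs_nonneg _) hε1
    · rw [abs_mul, abs_mul, abs_two, abs_of_nonneg hA0]
      exact mul_le_mul_of_nonneg_right (by linarith) (abs_nonneg _)
  rw [hD, hsq]
  calc _ = |ε| * (|ξ - θ| * |ε * (ξ - θ) + 2 * A * (θ - θm)|) := by
        rw [abs_mul, abs_mul, mul_assoc]
    _ ≤ (t - s) / σmin * (|ξ - θ| * (|ξ - θ| + 2 * |θ - θm|)) := by gcongr

theorem abs_Ltoy_succ_sub_riemannSum_le (ξ θ θm : ℝ) {σmin σmax : ℝ} (h0 : 0 < σmin)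
    (h1 : σmin < σmax) {n : ℕ} (hn : n ≠ 0) :
    |Ltoy ξ θ θm σmin σmax (n + 1) - (θ - θm) ^ 2 / (σmax - σmin)
        * ((σmax - σmin) / n * ∑ k ∈ range n, (1 - σmin / (σmin + (σmax - σmin) / n * k)) ^ 2)|
      ≤ (σmax - σmin) / σmin * (|ξ - θ| * (|ξ - θ| + 2 * |θ - θm|)) / n := by
  set h := (σmax - σmin) / n with h_def
  have hn_pos : (0 : ℝ) < n := Nat.cast_pos.2 (Nat.pos_of_ne_zero hn)
  have hh : 0 ≤ h := div_nonneg (sub_nonneg.2 h1.le) hn_pos.le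
  have hterm : ∀ k ∈ range n, |Dtoy ξ θ θm σmin σmax (n + 1) (k + 1) ^ 2
      - (θ - θm) ^ 2 * (1 - σmin / (σmin + h * k)) ^ 2|
        ≤ h / σmin * (|ξ - θ| * (|ξ - θ| + 2 * |θ - θm|)) := by
    intro k _
    rw [Dtoy, sigmaLvl_succ_succ, sigmaLvl_succ_succ, ← h_def]
    have hk := abs_toy_sq_sub_le h0 (le_add_of_nonneg_right (mul_nonneg hh k.cast_nonneg))
      (by gcongr; simp) ξ θ θm (t := σmin + h * (k + 1 : ℕ))
    have hstep : σmin + h * (k + 1 : ℕ) - (σmin + h * k) = h := by push_cast; ring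
    rwa [hstep] at hk
  have hsum : (θ - θm) ^ 2 / (σmax - σmin)
      * (h * ∑ k ∈ range n, (1 - σmin / (σmin + h * k)) ^ 2) =
      1 / n * ∑ k ∈ range n, (θ - θm) ^ 2 * (1 - σmin / (σmin + h * k)) ^ 2 := by
    rw [← mul_sum, h_def]
    field_simp [(sub_pos.2 h1).ne']
  rw [Ltoy_succ, hsum, ← mul_sub, ← sum_sub_distrib, abs_mul, abs_of_pos (one_div_pos.2 hn_pos)]
  calc _ ≤ 1 / n * (n * (h / σmin * (|ξ - θ| * (|ξ - θ| + 2 * |θ - θm|)))) := by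
        gcongr
        refine (abs_sum_le_sum_abs _ _).trans ?_
        simpa using sum_le_card_nsmul _ _ _ hterm
    _ = _ := by rw [h_def]; field_simp

/-- Proposition 1, equation (6): as `N → ∞` the toy consistency loss converges to
`((θ − θ⁻)²/(σmax − σmin)) ∫_{σmin}^{σmax} (1 − σmin/σ)² dσ`, which does not
depend on the data point `ξ`. -/
theorem limit_of_toy_consistency_loss (ξ θ θm σmin σmax : ℝ)
    (h0 : 0 < σmin) (h1 : σmin < σmax) :
    Tendsto (fun N : ℕ => Ltoy ξ θ θm σmin σmax N) atTop
      (nhds ((θ - θm) ^ 2 / (σmax - σmin) * ∫ s in σmin..σmax, (1 - σmin / s) ^ 2)) := by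
  rw [← tendsto_add_atTop_iff_nat 1]
  have hmono : MonotoneOn (fun s => (1 - σmin / s) ^ 2) (Set.Icc σmin σmax) :=
    (monotoneOn_one_sub_div_sq h0).mono Set.Icc_subset_Ici_self
  refine ((hmono.tendsto_riemannSum h1.le).const_mul ((θ - θm) ^ 2 / (σmax - σmin))).congr_dist
    (squeeze_zero' (.of_forall fun _ => dist_nonneg) ?_ (tendsto_const_div_atTop_nhds_zero_nat
      ((σmax - σmin) / σmin * (|ξ - θ| * (|ξ - θ| + 2 * |θ - θm|)))))
  filter_upwards [eventually_ne_atTop 0] with n hn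
  rw [dist_comm, Real.dist_eq]
  exact abs_Ltoy_succ_sub_riemannSum_le ξ θ θm h0 h1 hn
end

section
/- Fix real numbers ξ, θ and 0 < σ_min < σ_max. For N ≥ 2 let σᵢ = σ_min + ((i−1)/(N−1))·(σ_max − σ_min), Δσ = (σ_max − σ_min)/(N−1), Dᵢᴺ(θ, θ⁻) = (σ_min/σᵢ₊₁)ξ + (1 − σ_min/σᵢ₊₁)θ − (σ_min/σᵢ)ξ − (1 − σ_min/σᵢ)θ⁻, and Gᴺ(θ, θ⁻) = (2/(N−1))·Σ_{i=1}^{N−1} Dᵢᴺ(θ, θ⁻)·(1 − σ_min/σᵢ₊₁). Then lim_{N→∞} (1/Δσ)·Gᴺ(θ, θ) = (2(θ − ξ)/(σ_max − σ_min)) · ∫_{σ_min}^{σ_max} (σ_min/σ²)(1 − σ_min/σ) dσ, i.e. the scaled gradient converges to the derivative at θ of θ ↦ ((θ − ξ)²/(σ_max − σ_min))·∫_{σ_min}^{σ_max} (σ_min/σ²)(1 − σ_min/σ) dσ. -/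
open Filter Finset

/-- The gradient `Gᴺ(θ, θ⁻)` of the toy consistency loss in `θ`. -/
noncomputable def Gtoy (ξ θ θm σmin σmax : ℝ) (N : ℕ) : ℝ :=
  (2 / ((N : ℝ) - 1)) * ∑ i ∈ Finset.Icc 1 (N - 1),
    Dtoy ξ θ θm σmin σmax N i * (1 - σmin / sigmaLvl σmin σmax N (i + 1))

/-!
With `θ⁻ = θ` the `i`-th summand of `Gᴺ` is `(θ - ξ)(uᵢ - uᵢ₊₁)(1 - uᵢ₊₁)` for the skip weights
`uᵢ = σmin/σᵢ`, and `(a - b)(1 - b) = ((1 - b)² - (1 - a)²)/2 + (a - b)²/2`. The first part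
telescopes to `((1 - σmin/σmax)² - (1 - σmin/σmin)²)/2`, which is the integral, since
`(1 - σmin/σ)²/2` is an antiderivative of `(σmin/σ²)(1 - σmin/σ)`. As `σ ↦ σmin/σ` is
`1/σmin`-Lipschitz on `[σmin, ∞)`, each squared increment is `O(Δσ²)`, so their `N - 1` terms
contribute `O(1/N)`.
-/

lemma sum_Icc_one_sub {M : Type*} [AddCommGroup M] (f : ℕ → M) {N : ℕ} (hN : 1 ≤ N) :
    ∑ i ∈ Icc 1 (N - 1), (f (i + 1) - f i) = f N - f 1 := by
  rw [Icc_sub_one_right_eq_Ico_of_not_isMin (by simpa using Nat.one_le_iff_ne_zero.mp hN),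
    sum_Ico_sub f hN]

lemma sum_sub_mul_one_sub_eq (u : ℕ → ℝ) {N : ℕ} (hN : 1 ≤ N) :
    ∑ i ∈ Icc 1 (N - 1), (u i - u (i + 1)) * (1 - u (i + 1))
      = (1 - u N) ^ 2 / 2 - (1 - u 1) ^ 2 / 2 + (∑ i ∈ Icc 1 (N - 1), (u i - u (i + 1)) ^ 2) / 2 := by
  have hterm (i : ℕ) : (u i - u (i + 1)) * (1 - u (i + 1))
      = ((1 - u (i + 1)) ^ 2 / 2 - (1 - u i) ^ 2 / 2) + (u i - u (i + 1)) ^ 2 / 2 := by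
    ring
  rw [sum_congr rfl fun i _ => hterm i, sum_add_distrib,
    sum_Icc_one_sub (fun i => (1 - u i) ^ 2 / 2) hN, sum_div]

lemma abs_div_sub_div_le {a x y : ℝ} (ha : 0 < a) (hx : a ≤ x) (hy : a ≤ y) :
    |a / x - a / y| ≤ |x - y| / a := by
  have hx0 : 0 < x := ha.trans_le hx
  have hy0 : 0 < y := ha.trans_le hy
  have hxy : a / x - a / y = (y - x) / (x * y / a) := by field_simp
  rw [hxy, abs_div, abs_sub_comm, abs_of_pos (div_pos (mul_pos hx0 hy0) ha)]
  refine div_le_div_of_nonneg_left (abs_nonneg _) ha ?_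
  rw [le_div_iff₀ ha]
  nlinarith

lemma integral_div_sq_mul_one_sub_div (a : ℝ) {b c : ℝ} (h : (0 : ℝ) ∉ Set.uIcc b c) :
    ∫ s in b..c, a / s ^ 2 * (1 - a / s) = (1 - a / c) ^ 2 / 2 - (1 - a / b) ^ 2 / 2 := by
  have hne : ∀ s ∈ Set.uIcc b c, s ≠ 0 := fun s hs hs0 => h (hs0 ▸ hs)
  have hcont : ContinuousOn (fun s => a / s ^ 2 * (1 - a / s)) (Set.uIcc b c) := by
    fun_prop (disch := intro s hs; simpa using hne s hs)
  refine intervalIntegral.integral_eq_sub_of_hasDerivAt (f := fun s => (1 - a / s) ^ 2 / 2)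
    (fun s hs => ?_) hcont.intervalIntegrable
  have := (((hasDerivAt_inv (hne s hs)).const_mul a).const_sub 1).fun_pow 2 |>.div_const 2
  simp only [div_eq_mul_inv] at this ⊢
  refine this.congr_deriv ?_
  norm_num
  ring

section ToyModel

variable {σmin σmax : ℝ} {N : ℕ}

lemma sigmaLvl_one : sigmaLvl σmin σmax N 1 = σmin := by
  simp [sigmaLvl]

lemma sigmaLvl_self (hN : N ≠ 1) : sigmaLvl σmin σmax N N = σmax := by
  have hne : (N : ℝ) - 1 ≠ 0 := sub_ne_zero.mpr (by exact_mod_cast hN)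
  rw [sigmaLvl, div_self hne]
  ring

lemma sigmaLvl_succ_sub (i : ℕ) :
    sigmaLvl σmin σmax N (i + 1) - sigmaLvl σmin σmax N i = (σmax - σmin) / ((N : ℝ) - 1) := by
  simp only [sigmaLvl]
  push_cast
  ring

lemma le_sigmaLvl (h : σmin ≤ σmax) (hN : 1 ≤ N) {i : ℕ} (hi : 1 ≤ i) :
    σmin ≤ sigmaLvl σmin σmax N i := by
  have hN' : (1 : ℝ) ≤ N := by exact_mod_cast hN
  have hi' : (1 : ℝ) ≤ i := by exact_mod_cast hi
  have : 0 ≤ ((i : ℝ) - 1) / ((N : ℝ) - 1) * (σmax - σmin) := by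
    apply mul_nonneg (div_nonneg _ _) <;> linarith
  rw [sigmaLvl]
  linarith

noncomputable def skipCoeff (σmin σmax : ℝ) (N i : ℕ) : ℝ :=
  σmin / sigmaLvl σmin σmax N i

lemma Gtoy_self (ξ θ : ℝ) :
    Gtoy ξ θ θ σmin σmax N = 2 / ((N : ℝ) - 1) * (θ - ξ) * ∑ i ∈ Icc 1 (N - 1),
      (skipCoeff σmin σmax N i - skipCoeff σmin σmax N (i + 1))
        * (1 - skipCoeff σmin σmax N (i + 1)) := by
  rw [Gtoy, mul_assoc, Finset.mul_sum (Icc 1 (N - 1)) _ (θ - ξ)]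
  refine congrArg _ (sum_congr rfl fun i _ => ?_)
  rw [Dtoy, skipCoeff, skipCoeff]
  ring

lemma sum_sq_skipCoeff_sub_le (h0 : 0 < σmin) (h1 : σmin ≤ σmax) (hN : 2 ≤ N) :
    ∑ i ∈ Icc 1 (N - 1), (skipCoeff σmin σmax N i - skipCoeff σmin σmax N (i + 1)) ^ 2
      ≤ (σmax - σmin) ^ 2 / σmin ^ 2 / ((N : ℝ) - 1) := by
  have hN' : (2 : ℝ) ≤ N := by exact_mod_cast hN
  have hΔ : 0 ≤ (σmax - σmin) / ((N : ℝ) - 1) := div_nonneg (by linarith) (by linarith)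
  have hterm : ∀ i ∈ Icc 1 (N - 1),
      (skipCoeff σmin σmax N i - skipCoeff σmin σmax N (i + 1)) ^ 2
        ≤ ((σmax - σmin) / ((N : ℝ) - 1) / σmin) ^ 2 := by
    intro i hi
    have hi1 : 1 ≤ i := (mem_Icc.mp hi).1
    have := abs_div_sub_div_le h0 (le_sigmaLvl (N := N) h1 (by omega) hi1)
      (le_sigmaLvl (N := N) h1 (by omega) (by omega : 1 ≤ i + 1))
    rw [abs_sub_comm (sigmaLvl σmin σmax N i), sigmaLvl_succ_sub, abs_of_nonneg hΔ] at this
    rw [sq_le_sq, abs_of_nonneg (div_nonneg hΔ h0.le)]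
    exact this
  calc _ ≤ ∑ _i ∈ Icc 1 (N - 1), ((σmax - σmin) / ((N : ℝ) - 1) / σmin) ^ 2 := sum_le_sum hterm
    _ = _ := by
      rw [sum_const, Nat.card_Icc, nsmul_eq_mul, show N - 1 + 1 - 1 = N - 1 by omega,
        Nat.cast_sub (by omega), Nat.cast_one]
      field_simp [show (N : ℝ) - 1 ≠ 0 by linarith]

lemma tendsto_sum_sq_skipCoeff_sub (h0 : 0 < σmin) (h1 : σmin ≤ σmax) :
    Tendsto (fun N => ∑ i ∈ Icc 1 (N - 1),
      (skipCoeff σmin σmax N i - skipCoeff σmin σmax N (i + 1)) ^ 2) atTop (nhds 0) := by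
  have hden : Tendsto (fun N : ℕ => (N : ℝ) - 1) atTop atTop :=
    tendsto_atTop_add_const_right _ (-1) tendsto_natCast_atTop_atTop
  refine squeeze_zero' (g := fun N : ℕ => (σmax - σmin) ^ 2 / σmin ^ 2 / ((N : ℝ) - 1))
    (Eventually.of_forall fun N => sum_nonneg fun i _ => sq_nonneg _)
    ?_ (tendsto_const_nhds.div_atTop hden)
  filter_upwards [eventually_ge_atTop 2] with N hN using sum_sq_skipCoeff_sub_le h0 h1 hN

lemma scaled_Gtoy_self_eq (ξ θ : ℝ) (hN : 2 ≤ N) :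
    1 / ((σmax - σmin) / ((N : ℝ) - 1)) * Gtoy ξ θ θ σmin σmax N
      = 2 * (θ - ξ) / (σmax - σmin) * ((1 - σmin / σmax) ^ 2 / 2 - (1 - σmin / σmin) ^ 2 / 2
        + (∑ i ∈ Icc 1 (N - 1),
            (skipCoeff σmin σmax N i - skipCoeff σmin σmax N (i + 1)) ^ 2) / 2) := by
  have hN' : (2 : ℝ) ≤ N := by exact_mod_cast hN
  rw [Gtoy_self, sum_sub_mul_one_sub_eq _ (by omega), skipCoeff, skipCoeff, sigmaLvl_one,
    sigmaLvl_self (by omega)]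
  field_simp [show (N : ℝ) - 1 ≠ 0 by linarith]

end ToyModel

/-- Proposition 1, equation (7), case `θ⁻ = θ`: the gradient scaled by `1/Δσ`
converges to the derivative at `θ` of
`θ ↦ ((θ − ξ)²/(σmax − σmin)) ∫_{σmin}^{σmax} (σmin/σ²)(1 − σmin/σ) dσ`. -/
theorem scaled_gradient_limit_teacher_eq_student (ξ θ σmin σmax : ℝ)
    (h0 : 0 < σmin) (h1 : σmin < σmax) :
    Tendsto (fun N : ℕ =>
        (1 / ((σmax - σmin) / ((N : ℝ) - 1))) * Gtoy ξ θ θ σmin σmax N) atTop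
      (nhds (2 * (θ - ξ) / (σmax - σmin) *
        ∫ s in σmin..σmax, (σmin / s ^ 2) * (1 - σmin / s))) := by
  have hlim := (tendsto_sum_sq_skipCoeff_sub h0 h1.le).div_const 2
    |>.const_add ((1 - σmin / σmax) ^ 2 / 2 - (1 - σmin / σmin) ^ 2 / 2)
    |>.const_mul (2 * (θ - ξ) / (σmax - σmin))
  rw [zero_div, add_zero] at hlim
  rw [integral_div_sq_mul_one_sub_div σmin (Set.notMem_uIcc_of_lt h0 (h0.trans h1))]
  refine hlim.congr' ?_
  filter_upwards [eventually_ge_atTop 2] with N hN using (scaled_Gtoy_self_eq ξ θ hN).symm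
end

section
/- Fix real numbers ξ, θ, θ⁻ with θ⁻ > θ, and 0 < σ_min < σ_max. With σᵢ = σ_min + ((i−1)/(N−1))·(σ_max − σ_min), Δσ = (σ_max − σ_min)/(N−1), Dᵢᴺ(θ, θ⁻) = (σ_min/σᵢ₊₁)ξ + (1 − σ_min/σᵢ₊₁)θ − (σ_min/σᵢ)ξ − (1 − σ_min/σᵢ)θ⁻, and Gᴺ(θ, θ⁻) = (2/(N−1))·Σ_{i=1}^{N−1} Dᵢᴺ(θ, θ⁻)·(1 − σ_min/σᵢ₊₁), the scaled gradient (1/Δσ)·Gᴺ(θ, θ⁻) tends to −∞ as N → ∞. -/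
open Filter Finset

private lemma sigma_step (σmin σmax : ℝ) (N i : ℕ) :
    sigmaLvl σmin σmax N (i + 1) = sigmaLvl σmin σmax N i + (σmax - σmin) / ((N : ℝ) - 1) := by
  unfold sigmaLvl
  push_cast
  field_simp
  ring

private lemma sigma_bounds (σmin σmax : ℝ) (h0 : 0 < σmin) (h1 : σmin < σmax)
    {N i : ℕ} (hN : 2 ≤ N) (hi1 : 1 ≤ i) (hi2 : i ≤ N) :
    σmin ≤ sigmaLvl σmin σmax N i ∧ sigmaLvl σmin σmax N i ≤ σmax := by
  have hn : (0:ℝ) < (N:ℝ) - 1 := by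
    have : (2:ℝ) ≤ (N:ℝ) := by exact_mod_cast hN
    linarith
  have hi1' : (1:ℝ) ≤ (i:ℝ) := by exact_mod_cast hi1
  have hi2' : (i:ℝ) ≤ (N:ℝ) := by exact_mod_cast hi2
  have h01 : 0 ≤ ((i:ℝ) - 1) / ((N:ℝ) - 1) := div_nonneg (by linarith) hn.le
  have h02 : ((i:ℝ) - 1) / ((N:ℝ) - 1) ≤ 1 := by
    rw [div_le_one hn]; linarith
  unfold sigmaLvl
  constructor <;> nlinarith

set_option maxHeartbeats 1000000 in
private lemma term_bound (ξ θ θm σmin σmax : ℝ) (hgt : θ < θm) (h0 : 0 < σmin)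
    (h1 : σmin < σmax) {N i : ℕ} (hN : 2 ≤ N) (hi1 : 1 ≤ i) (hi2 : i ≤ N - 1) :
    Dtoy ξ θ θm σmin σmax N i * (1 - σmin / sigmaLvl σmin σmax N (i + 1))
      ≤ |θm - ξ| * ((σmax - σmin) / ((N : ℝ) - 1)) / σmin
        - (if N + 1 ≤ 2 * i then (θm - θ) * ((σmax - σmin) / (2 * σmax)) ^ 2 else 0) := by
  have hiN : i ≤ N := by omega
  have hi1N : i + 1 ≤ N := by omega
  have hn : (0:ℝ) < (N:ℝ) - 1 := by
    have : (2:ℝ) ≤ (N:ℝ) := by exact_mod_cast hN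
    linarith
  obtain ⟨hli, hui⟩ := sigma_bounds σmin σmax h0 h1 hN hi1 hiN
  obtain ⟨hlj, huj⟩ := sigma_bounds σmin σmax h0 h1 hN (by omega) hi1N
  set σi := sigmaLvl σmin σmax N i with hσi
  set σj := sigmaLvl σmin σmax N (i + 1) with hσj
  set h := (σmax - σmin) / ((N:ℝ) - 1) with hh
  have hhpos : 0 < h := div_pos (by linarith) hn
  have hstep : σj = σi + h := sigma_step σmin σmax N i
  have hσipos : 0 < σi := lt_of_lt_of_le h0 hli
  have hσjpos : 0 < σj := lt_of_lt_of_le h0 hlj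
  set y := σmin / σj with hy
  set e := σmin / σi - σmin / σj with he
  have hy0 : 0 < y := div_pos h0 hσjpos
  have hy1 : y ≤ 1 := by rw [hy, div_le_one hσjpos]; exact hlj
  have he0 : 0 ≤ e := by
    rw [he, sub_nonneg]
    apply div_le_div_of_nonneg_left h0.le hσipos
    rw [hstep]; linarith
  have heub : e ≤ h / σmin := by
    have he' : e = σmin * h / (σi * σj) := by
      rw [he, hstep]; field_simp; ring
    rw [he', div_le_div_iff₀ (by positivity) h0]
    have hmm : σmin * σmin ≤ σi * σj :=
      mul_le_mul hli hlj h0.le (le_trans h0.le hli)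
    nlinarith
  have hD : Dtoy ξ θ θm σmin σmax N i = (1 - y) * (θ - θm) + e * (θm - ξ) := by
    simp only [Dtoy, ← hσi, ← hσj, hy, he]; ring
  have habs1 : θm - ξ ≤ |θm - ξ| := le_abs_self _
  have habs0 : 0 ≤ |θm - ξ| := abs_nonneg _
  clear_value σi σj h y e
  rw [hD]
  by_cases hcase : N + 1 ≤ 2 * i
  · simp only [if_pos hcase]
    have hiR : (N:ℝ) + 1 ≤ 2 * (i:ℝ) := by exact_mod_cast hcase
    have hhalf : (1:ℝ)/2 ≤ ((i:ℝ) - 1) / ((N:ℝ) - 1) := by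
      rw [le_div_iff₀ hn]; linarith
    have hσilb : σmin + (σmax - σmin)/2 ≤ σi := by
      rw [hσi]; unfold sigmaLvl; nlinarith
    have hσjlb : σmin + (σmax - σmin)/2 ≤ σj := by rw [hstep]; linarith
    set c := (σmax - σmin) / (2 * σmax) with hc
    have hcpos : 0 < c := div_pos (by linarith) (by linarith)
    have hclt : c ≤ 1 - y := by
      have hyle : σmin / σj ≤ 1 - c := by
        rw [div_le_iff₀ hσjpos, hc]
        have h2 : (σmax - σmin) / (2 * σmax) * (2 * σmax) = σmax - σmin :=
          div_mul_cancel₀ _ (ne_of_gt (by linarith : (0:ℝ) < 2 * σmax))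
        nlinarith [sq_nonneg (σmax - σmin)]
      rw [hy]; linarith
    have t2 : e * (θm - ξ) * (1 - y) ≤ |θm - ξ| * h / σmin := by
      have s1 : e * (θm - ξ) * (1 - y) ≤ e * |θm - ξ| * (1 - y) :=
        mul_le_mul_of_nonneg_right (mul_le_mul_of_nonneg_left habs1 he0) (by linarith)
      have s2 : e * |θm - ξ| * (1 - y) ≤ e * |θm - ξ| := by
        nlinarith [mul_nonneg (mul_nonneg he0 habs0) hy0.le]
      have s3 : e * |θm - ξ| ≤ (h / σmin) * |θm - ξ| :=
        mul_le_mul_of_nonneg_right heub habs0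
      have s4 : (h / σmin) * |θm - ξ| = |θm - ξ| * h / σmin := by ring
      linarith
    have t1 : (1 - y) * (θ - θm) * (1 - y) ≤ -((θm - θ) * c ^ 2) := by
      nlinarith [mul_nonneg (mul_nonneg (sub_nonneg.2 hclt)
        (by linarith : (0:ℝ) ≤ 1 - y + c)) (by linarith : (0:ℝ) ≤ θm - θ)]
    have expand : ((1 - y) * (θ - θm) + e * (θm - ξ)) * (1 - y)
        = (1 - y) * (θ - θm) * (1 - y) + e * (θm - ξ) * (1 - y) := by ring
    rw [expand]
    linarith
  · simp only [if_neg hcase]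
    have t2 : e * (θm - ξ) * (1 - y) ≤ |θm - ξ| * h / σmin := by
      have s1 : e * (θm - ξ) * (1 - y) ≤ e * |θm - ξ| * (1 - y) :=
        mul_le_mul_of_nonneg_right (mul_le_mul_of_nonneg_left habs1 he0) (by linarith)
      have s2 : e * |θm - ξ| * (1 - y) ≤ e * |θm - ξ| := by
        nlinarith [mul_nonneg (mul_nonneg he0 habs0) hy0.le]
      have s3 : e * |θm - ξ| ≤ (h / σmin) * |θm - ξ| :=
        mul_le_mul_of_nonneg_right heub habs0
      have s4 : (h / σmin) * |θm - ξ| = |θm - ξ| * h / σmin := by ring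
      linarith
    have t1 : (1 - y) * (θ - θm) * (1 - y) ≤ 0 := by
      nlinarith [mul_nonneg (mul_nonneg (by linarith : (0:ℝ) ≤ 1 - y)
        (by linarith : (0:ℝ) ≤ 1 - y)) (by linarith : (0:ℝ) ≤ θm - θ)]
    have expand : ((1 - y) * (θ - θm) + e * (θm - ξ)) * (1 - y)
        = (1 - y) * (θ - θm) * (1 - y) + e * (θm - ξ) * (1 - y) := by ring
    rw [expand]
    linarith

/-- Proposition 1, equation (7), case `θ⁻ > θ`: the gradient scaled by `1/Δσ`
tends to `−∞` as `N → ∞`. -/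
theorem scaled_gradient_limit_teacher_gt_student (ξ θ θm σmin σmax : ℝ)
    (hgt : θ < θm) (h0 : 0 < σmin) (h1 : σmin < σmax) :
    Tendsto (fun N : ℕ =>
        (1 / ((σmax - σmin) / ((N : ℝ) - 1))) * Gtoy ξ θ θm σmin σmax N) atTop atBot := by
  have hΔ : (0:ℝ) < σmax - σmin := sub_pos.2 h1
  set K := (θm - θ) * ((σmax - σmin) / (2 * σmax)) ^ 2 with hK
  have hKpos : 0 < K :=
    mul_pos (sub_pos.2 hgt) (pow_pos (div_pos hΔ (by linarith)) 2)
  set C := 2 * |θm - ξ| / σmin with hC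
  have key : ∀ᶠ N : ℕ in atTop,
      (1 / ((σmax - σmin) / ((N : ℝ) - 1))) * Gtoy ξ θ θm σmin σmax N
        ≤ C - (K / (σmax - σmin)) * ((N:ℝ) - 2) := by
    filter_upwards [eventually_ge_atTop 2] with N hN
    have hn : (0:ℝ) < (N:ℝ) - 1 := by
      have : (2:ℝ) ≤ (N:ℝ) := by exact_mod_cast hN
      linarith
    have hh : 0 < (σmax - σmin) / ((N:ℝ) - 1) := div_pos hΔ hn
    set E := |θm - ξ| * ((σmax - σmin) / ((N:ℝ) - 1)) / σmin with hE
    set S := ∑ i ∈ Icc 1 (N - 1),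
        Dtoy ξ θ θm σmin σmax N i * (1 - σmin / sigmaLvl σmin σmax N (i + 1)) with hS
    set M := ((Icc 1 (N - 1)).filter (fun i => N + 1 ≤ 2 * i)).card with hM
    have hsum : S ≤ ∑ i ∈ Icc 1 (N - 1), (E - if N + 1 ≤ 2 * i then K else 0) := by
      rw [hS]
      refine Finset.sum_le_sum fun i hi => ?_
      rw [Finset.mem_Icc] at hi
      exact term_bound ξ θ θm σmin σmax hgt h0 h1 hN hi.1 hi.2
    have hite : ∑ i ∈ Icc 1 (N - 1), (if N + 1 ≤ 2 * i then K else 0) = (M:ℝ) * K := by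
      rw [← Finset.sum_filter, Finset.sum_const, nsmul_eq_mul]
    have hcards : ((Icc 1 (N - 1)).card : ℝ) = (N:ℝ) - 1 := by
      rw [Nat.card_Icc]
      have : N - 1 + 1 - 1 = N - 1 := by omega
      rw [this, Nat.cast_sub (by omega)]
      norm_num
    have hsum2 : ∑ i ∈ Icc 1 (N - 1), (E - if N + 1 ≤ 2 * i then K else 0)
        = ((N:ℝ) - 1) * E - (M:ℝ) * K := by
      rw [Finset.sum_sub_distrib, hite, Finset.sum_const, nsmul_eq_mul, hcards]
    have hSle : S ≤ ((N:ℝ) - 1) * E - (M:ℝ) * K := hsum.trans_eq hsum2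
    have hsubset : Icc ((N + 2) / 2) (N - 1) ⊆ (Icc 1 (N - 1)).filter (fun i => N + 1 ≤ 2 * i) := by
      intro i hi
      simp only [Finset.mem_Icc, Finset.mem_filter] at hi ⊢
      omega
    have hMnat : N ≤ 2 * M + 2 := by
      have hcle := Finset.card_le_card hsubset
      rw [Nat.card_Icc] at hcle
      omega
    have hMlb : (N:ℝ) - 2 ≤ 2 * (M:ℝ) := by
      have : (N:ℝ) ≤ 2 * (M:ℝ) + 2 := by exact_mod_cast hMnat
      linarith
    have hGtoy : Gtoy ξ θ θm σmin σmax N = (2 / ((N:ℝ) - 1)) * S := by rw [Gtoy, hS]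
    rw [hGtoy]
    have hcoef : (1 / ((σmax - σmin) / ((N:ℝ) - 1))) * (2 / ((N:ℝ) - 1))
        = 2 / (σmax - σmin) := by
      field_simp
    have hNE : ((N:ℝ) - 1) * E = |θm - ξ| * (σmax - σmin) / σmin := by
      rw [hE]; field_simp
    have step1 : (1 / ((σmax - σmin) / ((N:ℝ) - 1))) * ((2 / ((N:ℝ) - 1)) * S)
        = (2 / (σmax - σmin)) * S := by
      rw [← mul_assoc, hcoef]
    rw [step1]
    have step2 : (2 / (σmax - σmin)) * S
        ≤ (2 / (σmax - σmin)) * (((N:ℝ) - 1) * E - (M:ℝ) * K) :=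
      mul_le_mul_of_nonneg_left hSle (by positivity)
    have step3 : (2 / (σmax - σmin)) * (((N:ℝ) - 1) * E - (M:ℝ) * K)
        ≤ C - (K / (σmax - σmin)) * ((N:ℝ) - 2) := by
      rw [hNE, mul_sub]
      have hid1 : (2 / (σmax - σmin)) * (|θm - ξ| * (σmax - σmin) / σmin) = C := by
        rw [hC]; field_simp
      have hid2 : (2 / (σmax - σmin)) * ((M:ℝ) * K) = (K / (σmax - σmin)) * (2 * (M:ℝ)) := by
        ring
      rw [hid1, hid2]
      have hKd : 0 < K / (σmax - σmin) := div_pos hKpos hΔ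
      have := mul_le_mul_of_nonneg_left hMlb hKd.le
      linarith
    linarith
  have hb1 : Tendsto (fun N : ℕ => (N:ℝ)) atTop atTop := tendsto_natCast_atTop_atTop
  have hb2 : Tendsto (fun N : ℕ => (N:ℝ) - 2) atTop atTop :=
    tendsto_atTop_add_const_right atTop (-2) hb1
  have hb3 : Tendsto (fun N : ℕ => (K / (σmax - σmin)) * ((N:ℝ) - 2)) atTop atTop :=
    hb2.const_mul_atTop (div_pos hKpos hΔ)
  have hb4 : Tendsto (fun N : ℕ => -((K / (σmax - σmin)) * ((N:ℝ) - 2))) atTop atBot :=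
    tendsto_neg_atTop_atBot.comp hb3
  have hb5 : Tendsto (fun N : ℕ => C + -((K / (σmax - σmin)) * ((N:ℝ) - 2))) atTop atBot :=
    tendsto_atBot_add_const_left atTop C hb4
  have hb6 : Tendsto (fun N : ℕ => C - (K / (σmax - σmin)) * ((N:ℝ) - 2)) atTop atBot := by
    simpa [sub_eq_add_neg] using hb5
  exact tendsto_atBot_mono' atTop key hb6
end
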